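/- For every positive integer n and all real numbers α, β, γ, the n×n Hankel determinant det(αβγ·m_{i+j} + (αβ+βγ+γα)·m_{i+j+1} + (α+β+γ)·m_{i+j+2} + m_{i+j+3})_{i,j=0}^{n−1} equals [ Σ_{0≤k≤j≤n} f_j(α)·f_k(β)·f_k(γ)·f^{(j+1)}_{n−j}(β)·∏_{ℓ=k}^{n−1} t_ℓ + Σ_{0≤j<k≤n} f_j(α)·f_j(β)·f_k(γ)·f^{(k+1)}_{n−k}(β)·∏_{ℓ=j}^{n−1} t_ℓ ] · det(m_{i+j})_{i,j=0}^{n−1}. -/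
import Mathlib


/-- `motzkinGF s t n k` is the weighted Motzkin path generating function `m(n,k)`:
`m(0,k) = [k = 0]`, `m(n,k) = 0` for `k < 0`, and
`m(n,k) = m(n-1,k-1) + s_k m(n-1,k) + t_k m(n-1,k+1)` for `n ≥ 1`, `k ≥ 0`. -/
def motzkinGF (s t : ℕ → ℝ) : ℕ → ℤ → ℝ
  | 0, k => if k = 0 then 1 else 0
  | n+1, k =>
      if k < 0 then 0
      else motzkinGF s t n (k-1) + s k.toNat * motzkinGF s t n k
             + t k.toNat * motzkinGF s t n (k+1)

/-- The polynomials `f_n(α)`: `f_0 = 1`, `f_1 = α + s_0`, and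
`f_n(α) = (α + s_{n-1}) f_{n-1}(α) - t_{n-2} f_{n-2}(α)` for `n ≥ 2`. -/
def fpoly (s t : ℕ → ℝ) (α : ℝ) : ℕ → ℝ
  | 0 => 1
  | 1 => α + s 0
  | n+2 => (α + s (n+1)) * fpoly s t α (n+1) - t n * fpoly s t α n

/-- The shifted polynomials `f^{(r)}_n(α)`, defined by the recurrence of `fpoly` with
`s_l` replaced by `s_{l+r}` and `t_l` replaced by `t_{l+r}`. -/
def fpolyShift (s t : ℕ → ℝ) (r : ℕ) (α : ℝ) : ℕ → ℝ :=
  fpoly (fun i => s (i + r)) (fun i => t (i + r)) α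

namespace HankelAux

noncomputable section
open Finset Matrix

variable (s t : ℕ → ℝ)

/-- the transfer operator. -/
def Tstep (u : ℤ → ℝ) : ℤ → ℝ := fun k =>
  if k < 0 then 0 else u (k-1) + s k.toNat * u k + t k.toNat * u (k+1)

lemma motzkinGF_succ (n : ℕ) : motzkinGF s t (n+1) = Tstep s t (motzkinGF s t n) := rfl

lemma motzkinGF_succ_nonneg (n : ℕ) {k : ℤ} (hk : ¬ k < 0) :
    motzkinGF s t (n+1) k = motzkinGF s t n (k-1) + s k.toNat * motzkinGF s t n k
      + t k.toNat * motzkinGF s t n (k+1) := by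
  rw [motzkinGF, if_neg hk]

lemma motzkinGF_neg {k : ℤ} (hk : k < 0) : ∀ n, motzkinGF s t n k = 0
  | 0 => by rw [motzkinGF, if_neg (by omega)]
  | n+1 => by rw [motzkinGF, if_pos hk]

lemma motzkinGF_gt : ∀ (n : ℕ), ∀ k : ℤ, (n : ℤ) < k → motzkinGF s t n k = 0
  | 0, k, h => by rw [motzkinGF, if_neg (by omega)]
  | n+1, k, h => by
      rw [motzkinGF, if_neg (by omega)]
      rw [motzkinGF_gt n (k-1) (by omega), motzkinGF_gt n k (by omega),
        motzkinGF_gt n (k+1) (by omega)]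
      ring

lemma motzkinGF_self : ∀ n : ℕ, motzkinGF s t n (n : ℤ) = 1
  | 0 => by norm_num [motzkinGF]
  | n+1 => by
      rw [motzkinGF, if_neg (by omega)]
      have h1 : ((n:ℤ)+1) - 1 = (n:ℤ) := by ring
      push_cast
      rw [h1, motzkinGF_self n, motzkinGF_gt s t n ((n:ℤ)+1) (by omega),
        motzkinGF_gt s t n ((n:ℤ)+1+1) (by omega)]
      ring

/-- `motzkinGF` with natural-number height argument. -/
def msh (n k : ℕ) : ℝ := motzkinGF s t n (k : ℤ)

lemma msh_succ (n k : ℕ) :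
    msh s t (n+1) k = (if k = 0 then 0 else msh s t n (k-1)) + s k * msh s t n k
      + t k * msh s t n (k+1) := by
  rw [msh, motzkinGF, if_neg (by omega)]
  have h2 : ((k:ℤ)).toNat = k := by omega
  rcases Nat.eq_zero_or_pos k with hk | hk
  · subst hk
    rw [if_pos rfl, motzkinGF_neg s t (by norm_num)]
    simp only [msh, h2]
    push_cast
    ring
  · rw [if_neg (by omega)]
    have h1 : ((k:ℤ)) - 1 = ((k-1 : ℕ) : ℤ) := by omega
    rw [h1, h2]
    simp only [msh]
    push_cast
    ring

lemma msh_gt {n k : ℕ} (h : n < k) : msh s t n k = 0 := motzkinGF_gt s t n k (by omega)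

lemma msh_self (n : ℕ) : msh s t n n = 1 := motzkinGF_self s t n


/-- `pt k = t 0 * ... * t (k-1)`. -/
def pt (k : ℕ) : ℝ := ∏ ℓ ∈ Finset.range k, t ℓ

lemma swapS (N a b : ℕ) (ha : a + 1 < N) :
    ∑ k ∈ Finset.range N, pt t k * (msh s t (a+1) k * msh s t b k)
      = ∑ k ∈ Finset.range N, pt t k * (msh s t a k * msh s t (b+1) k) := by
  obtain ⟨M, rfl⟩ : ∃ M, N = M + 1 := ⟨N - 1, by omega⟩
  have h3 : ∀ k, pt t (k+1) = pt t k * t k := by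
    intro k; rw [pt, pt, Finset.prod_range_succ]
  have key : ∀ c d : ℕ, c < M →
      ∑ k ∈ Finset.range (M+1), pt t k * (msh s t (c+1) k * msh s t d k)
        = (∑ k ∈ Finset.range M, pt t k * t k *
            (msh s t c k * msh s t d (k+1) + msh s t c (k+1) * msh s t d k))
          + ∑ k ∈ Finset.range (M+1), pt t k * (s k * (msh s t c k * msh s t d k)) := by
    intro c d hc
    have expand : ∀ k ∈ Finset.range (M+1),
        pt t k * (msh s t (c+1) k * msh s t d k)
          = pt t k * ((if k = 0 then 0 else msh s t c (k-1)) * msh s t d k)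
            + pt t k * (s k * (msh s t c k * msh s t d k))
            + pt t k * (t k * (msh s t c (k+1) * msh s t d k)) := by
      intro k _
      rw [msh_succ]
      ring
    rw [Finset.sum_congr rfl expand]
    rw [Finset.sum_add_distrib, Finset.sum_add_distrib]
    have h1 : ∑ k ∈ Finset.range (M+1),
        pt t k * ((if k = 0 then 0 else msh s t c (k-1)) * msh s t d k)
        = ∑ k ∈ Finset.range M, pt t (k+1) * (msh s t c k * msh s t d (k+1)) := by
      rw [Finset.sum_range_succ']
      simp
    have h2 : ∑ k ∈ Finset.range (M+1), pt t k * (t k * (msh s t c (k+1) * msh s t d k))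
        = ∑ k ∈ Finset.range M, pt t k * (t k * (msh s t c (k+1) * msh s t d k)) := by
      rw [Finset.sum_range_succ, msh_gt s t (show c < M + 1 by omega)]
      simp
    rw [h1, h2, add_right_comm, ← Finset.sum_add_distrib]
    congr 1
    apply Finset.sum_congr rfl
    intro k _
    rw [h3]
    ring
  have expand2 : ∀ k ∈ Finset.range (M+1),
      pt t k * (msh s t a k * msh s t (b+1) k)
        = pt t k * ((if k = 0 then 0 else msh s t b (k-1)) * msh s t a k)
          + pt t k * (s k * (msh s t b k * msh s t a k))
          + pt t k * (t k * (msh s t b (k+1) * msh s t a k)) := by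
    intro k _
    rw [msh_succ]
    ring
  rw [key a b (by omega), Finset.sum_congr rfl expand2]
  rw [Finset.sum_add_distrib, Finset.sum_add_distrib]
  have h1 : ∑ k ∈ Finset.range (M+1),
      pt t k * ((if k = 0 then 0 else msh s t b (k-1)) * msh s t a k)
      = ∑ k ∈ Finset.range M, pt t (k+1) * (msh s t b k * msh s t a (k+1)) := by
    rw [Finset.sum_range_succ']
    simp
  have h2 : ∑ k ∈ Finset.range (M+1), pt t k * (t k * (msh s t b (k+1) * msh s t a k))
      = ∑ k ∈ Finset.range M, pt t k * (t k * (msh s t b (k+1) * msh s t a k)) := by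
    rw [Finset.sum_range_succ, msh_gt s t (show a < M by omega)]
    simp
  rw [h1, h2, add_right_comm, ← Finset.sum_add_distrib]
  congr 1
  · apply Finset.sum_congr rfl
    intro k _
    rw [h3]
    ring
  · apply Finset.sum_congr rfl
    intro k _
    ring


/-- Coefficients expressing the orthogonal-polynomial basis in terms of powers of the
transfer operator: `δ_j = ∑ i ≤ j, Lc j i • (T^i δ_0)`. -/
def Lc : ℕ → ℕ → ℝ
  | 0, i => if i = 0 then 1 else 0
  | 1, i => if i = 1 then 1 else if i = 0 then -(s 0) else 0
  | j+2, i => (if i = 0 then 0 else Lc (j+1) (i-1)) - s (j+1) * Lc (j+1) i - t j * Lc j i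

lemma Lc_gt : ∀ j i : ℕ, j < i → Lc s t j i = 0
  | 0, i, h => by rw [Lc, if_neg (by omega)]
  | 1, i, h => by rw [Lc, if_neg (by omega), if_neg (by omega)]
  | (j+2), i, h => by
      rw [Lc, if_neg (by omega), Lc_gt (j+1) (i-1) (by omega), Lc_gt (j+1) i (by omega),
        Lc_gt j i (by omega)]
      ring

lemma Lc_self : ∀ j : ℕ, Lc s t j j = 1
  | 0 => by rw [Lc]; simp
  | 1 => by rw [Lc]; simp
  | (j+2) => by
      rw [Lc, if_neg (by omega), show j+2-1 = j+1 from rfl, Lc_self (j+1),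
        Lc_gt s t (j+1) (j+2) (by omega), Lc_gt s t j (j+2) (by omega)]
      ring

lemma mul_ite_eq (x y : ℝ) (p : Prop) [Decidable p] (h : p → x = y) :
    x * (if p then 1 else 0) = y * (if p then 1 else 0) := by
  split_ifs with hp
  · rw [h hp]
  · ring

lemma Lc_delta : ∀ (j : ℕ) (k : ℤ),
    ∑ i ∈ Finset.range (j+1), Lc s t j i * motzkinGF s t i k
      = if k = (j:ℤ) then 1 else 0 := by
  have hneg : ∀ (j : ℕ) (k : ℤ), k < 0 →
      ∑ i ∈ Finset.range (j+1), Lc s t j i * motzkinGF s t i k = 0 := by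
    intro j k hk
    apply Finset.sum_eq_zero
    intro i _
    rw [motzkinGF_neg s t hk]
    ring
  intro j
  induction j using Nat.strong_induction_on with
  | _ j IH =>
    match j with
    | 0 => intro k; simpa [Lc, motzkinGF] using rfl
    | 1 =>
      intro k
      by_cases hk : k < 0
      · rw [hneg 1 k hk, if_neg (by omega)]
      rw [Finset.sum_range_succ, Finset.sum_range_one]
      rw [show Lc s t 1 0 = -(s 0) by rw [Lc]; norm_num,
        show Lc s t 1 1 = 1 by rw [Lc]; norm_num]
      rw [motzkinGF_succ_nonneg s t 0 hk]
      rw [show motzkinGF s t 0 (k-1) = if k = 1 then 1 else 0 by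
          rw [motzkinGF]; apply if_congr (by omega) rfl rfl,
        show motzkinGF s t 0 k = if k = 0 then 1 else 0 from rfl,
        show motzkinGF s t 0 (k+1) = 0 by
          rw [motzkinGF, if_neg (by omega)],
        mul_ite_eq (s k.toNat) (s 0) (k = 0) (by intro h; subst h; norm_num)]
      push_cast
      ring
    | (j+2) =>
      intro k
      by_cases hk : k < 0
      · rw [hneg (j+2) k hk, if_neg (by omega)]
      have hLc : ∀ i ∈ Finset.range (j+3),
          Lc s t (j+2) i * motzkinGF s t i k
            = (if i = 0 then 0 else Lc s t (j+1) (i-1)) * motzkinGF s t i k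
              - s (j+1) * (Lc s t (j+1) i * motzkinGF s t i k)
              - t j * (Lc s t j i * motzkinGF s t i k) := by
        intro i _
        rw [Lc]
        ring
      rw [show j+2+1 = j+3 from rfl, Finset.sum_congr rfl hLc,
        Finset.sum_sub_distrib, Finset.sum_sub_distrib, ← Finset.mul_sum, ← Finset.mul_sum]
      have hB : ∑ i ∈ Finset.range (j+3), Lc s t (j+1) i * motzkinGF s t i k
          = if k = ((j:ℤ)+1) then 1 else 0 := by
        rw [show j+3 = (j+2)+1 from rfl, Finset.sum_range_succ,
          Lc_gt s t (j+1) (j+2) (by omega)]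
        have := IH (j+1) (by omega) k
        push_cast at this ⊢
        rw [this]
        ring
      have hC : ∑ i ∈ Finset.range (j+3), Lc s t j i * motzkinGF s t i k
          = if k = (j:ℤ) then 1 else 0 := by
        rw [show j+3 = (j+2)+1 from rfl, Finset.sum_range_succ,
          Lc_gt s t j (j+2) (by omega),
          show j+2 = (j+1)+1 from rfl, Finset.sum_range_succ,
          Lc_gt s t j (j+1) (by omega)]
        rw [IH j (by omega) k]
        ring
      have hA : ∑ i ∈ Finset.range (j+3),
          (if i = 0 then 0 else Lc s t (j+1) (i-1)) * motzkinGF s t i k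
          = (if k = ((j:ℤ)+2) then 1 else 0) + s (j+1) * (if k = ((j:ℤ)+1) then 1 else 0)
            + t j * (if k = (j:ℤ) then 1 else 0) := by
        rw [Finset.sum_range_succ']
        have hstep : ∀ i ∈ Finset.range (j+2),
            (if i+1 = 0 then (0:ℝ) else Lc s t (j+1) (i+1-1)) * motzkinGF s t (i+1) k
              = Lc s t (j+1) i * motzkinGF s t (i+1) k := by
          intro i _
          rw [if_neg (Nat.succ_ne_zero i), Nat.add_sub_cancel]
        rw [Finset.sum_congr rfl hstep, if_pos rfl, zero_mul, add_zero]
        have hm : ∀ i, motzkinGF s t (i+1) k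
            = motzkinGF s t i (k-1) + s k.toNat * motzkinGF s t i k
              + t k.toNat * motzkinGF s t i (k+1) := by
          intro i; rw [motzkinGF_succ_nonneg s t i hk]
        have hsplit : ∀ i ∈ Finset.range (j+2),
            Lc s t (j+1) i * motzkinGF s t (i+1) k
              = Lc s t (j+1) i * motzkinGF s t i (k-1)
                + s k.toNat * (Lc s t (j+1) i * motzkinGF s t i k)
                + t k.toNat * (Lc s t (j+1) i * motzkinGF s t i (k+1)) := by
          intro i _
          rw [hm]
          ring
        rw [Finset.sum_congr rfl hsplit, Finset.sum_add_distrib, Finset.sum_add_distrib,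
          ← Finset.mul_sum, ← Finset.mul_sum]
        have e1 := IH (j+1) (by omega) (k-1)
        have e2 := IH (j+1) (by omega) k
        have e3 := IH (j+1) (by omega) (k+1)
        push_cast at e1 e2 e3
        rw [e1, e2, e3]
        rw [show (if k - 1 = (j:ℤ)+1 then (1:ℝ) else 0) = if k = (j:ℤ)+2 then 1 else 0 from
          if_congr (by omega) rfl rfl]
        rw [show (if k + 1 = (j:ℤ)+1 then (1:ℝ) else 0) = if k = (j:ℤ) then 1 else 0 from
          if_congr (by omega) rfl rfl]
        rw [mul_ite_eq (s k.toNat) (s (j+1)) (k = (j:ℤ)+1) (by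
          intro h
          congr 1
          omega)]
        rw [mul_ite_eq (t k.toNat) (t j) (k = (j:ℤ)) (by
          intro h
          congr 1
          omega)]
      rw [hA, hB, hC]
      push_cast
      ring


lemma splitS (N : ℕ) : ∀ a b : ℕ, a < N →
    ∑ k ∈ Finset.range N, pt t k * (msh s t a k * msh s t b k) = msh s t (a+b) 0
  | 0, b, ha => by
      rw [Finset.sum_eq_single 0]
      · rw [pt, Finset.prod_range_zero, msh_self]
        simp
      · intro k _ hk
        rw [show msh s t 0 k = 0 by
          rw [msh, motzkinGF, if_neg (by exact_mod_cast hk)]]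
        ring
      · intro h
        exact absurd (Finset.mem_range.mpr ha) h
  | a+1, b, ha => by
      rw [swapS s t N a b (by omega), splitS N a (b+1) (by omega)]
      ring_nf

/-- `aff θ u = (T + θ) u`. -/
def aff (θ : ℝ) (u : ℤ → ℝ) : ℤ → ℝ := fun k => Tstep s t u k + θ * u k

lemma Tstep_sum {ι : Type*} (F : Finset ι) (c : ι → ℝ) (g : ι → ℤ → ℝ) (k : ℤ) :
    Tstep s t (fun x => ∑ i ∈ F, c i * g i x) k = ∑ i ∈ F, c i * Tstep s t (g i) k := by
  simp only [Tstep]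
  split_ifs with h
  · simp
  · rw [Finset.mul_sum, Finset.mul_sum, ← Finset.sum_add_distrib, ← Finset.sum_add_distrib]
    apply Finset.sum_congr rfl
    intro i _
    ring

lemma aff_sum {ι : Type*} (θ : ℝ) (F : Finset ι) (c : ι → ℝ) (g : ι → ℤ → ℝ) (k : ℤ) :
    aff s t θ (fun x => ∑ i ∈ F, c i * g i x) k = ∑ i ∈ F, c i * aff s t θ (g i) k := by
  simp only [aff, Tstep_sum]
  rw [Finset.mul_sum, ← Finset.sum_add_distrib]
  apply Finset.sum_congr rfl
  intro i _
  ring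

lemma Tstep_comb (u v : ℤ → ℝ) (c : ℝ) (k : ℤ) :
    Tstep s t (fun x => u x + c * v x) k = Tstep s t u k + c * Tstep s t v k := by
  simp only [Tstep]
  split_ifs with h
  · ring
  · ring

lemma Tstep_comb2 (u v w : ℤ → ℝ) (c d : ℝ) (k : ℤ) :
    Tstep s t (fun x => u x + c * v x + d * w x) k
      = Tstep s t u k + c * Tstep s t v k + d * Tstep s t w k := by
  simp only [Tstep]
  split_ifs with h
  · ring
  · ring

lemma aff_motzkin (θ : ℝ) (i : ℕ) :
    aff s t θ (motzkinGF s t i) = fun x => motzkinGF s t (i+1) x + θ * motzkinGF s t i x := by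
  funext x
  rw [aff, motzkinGF_succ]

lemma aff2_motzkin (β γ : ℝ) (i : ℕ) :
    aff s t β (aff s t γ (motzkinGF s t i))
      = fun x => motzkinGF s t (i+2) x + (β+γ) * motzkinGF s t (i+1) x
          + (β*γ) * motzkinGF s t i x := by
  rw [aff_motzkin]
  funext x
  simp only [aff]
  rw [Tstep_comb]
  rw [show Tstep s t (motzkinGF s t (i+1)) = motzkinGF s t (i+2) from
    (motzkinGF_succ s t (i+1)).symm,
    show Tstep s t (motzkinGF s t i) = motzkinGF s t (i+1) from (motzkinGF_succ s t i).symm]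
  ring

lemma aff3_motzkin (α β γ : ℝ) (i : ℕ) (k : ℤ) :
    aff s t α (aff s t β (aff s t γ (motzkinGF s t i))) k
      = α*β*γ * motzkinGF s t i k + (α*β+β*γ+γ*α) * motzkinGF s t (i+1) k
        + (α+β+γ) * motzkinGF s t (i+2) k + motzkinGF s t (i+3) k := by
  rw [aff2_motzkin]
  simp only [aff]
  rw [Tstep_comb2]
  rw [show Tstep s t (motzkinGF s t (i+2)) = motzkinGF s t (i+3) from
    (motzkinGF_succ s t (i+2)).symm,
    show Tstep s t (motzkinGF s t (i+1)) = motzkinGF s t (i+2) from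
    (motzkinGF_succ s t (i+1)).symm,
    show Tstep s t (motzkinGF s t i) = motzkinGF s t (i+1) from (motzkinGF_succ s t i).symm]
  ring

/-- The delta function at height `j`. -/
def deltaF (j : ℕ) : ℤ → ℝ := fun k => if k = (j:ℤ) then 1 else 0

lemma rowop (n j : ℕ) (hj : j < n) (α β γ : ℝ) (k : ℤ) :
    ∑ i ∈ Finset.range n, Lc s t j i * aff s t α (aff s t β (aff s t γ (motzkinGF s t i))) k
      = aff s t α (aff s t β (aff s t γ (deltaF j))) k := by
  have hinner : (fun x => ∑ i ∈ Finset.range n, Lc s t j i * motzkinGF s t i x) = deltaF j := by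
    funext x
    have hsub : Finset.range (j+1) ⊆ Finset.range n := Finset.range_subset_range.mpr (by omega)
    have hz : ∀ i ∈ Finset.range n, i ∉ Finset.range (j+1) →
        Lc s t j i * motzkinGF s t i x = 0 := by
      intro i _ hi
      rw [Lc_gt s t j i (by simpa using hi)]
      ring
    rw [← Finset.sum_subset hsub hz, Lc_delta s t j x, deltaF]
  have h1 : (fun x => ∑ i ∈ Finset.range n,
        Lc s t j i * aff s t β (aff s t γ (motzkinGF s t i)) x)
      = aff s t β (fun x => ∑ i ∈ Finset.range n,
          Lc s t j i * aff s t γ (motzkinGF s t i) x) := by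
    funext x
    rw [aff_sum]
  have h2 : (fun x => ∑ i ∈ Finset.range n, Lc s t j i * aff s t γ (motzkinGF s t i) x)
      = aff s t γ (fun x => ∑ i ∈ Finset.range n, Lc s t j i * motzkinGF s t i x) := by
    funext x
    rw [aff_sum]
  rw [← aff_sum, h1, h2, hinner]


lemma cauchyBinet_succ {R : Type*} [CommRing R] (n : ℕ)
    (X : Matrix (Fin n) (Fin (n+1)) R) (W : Matrix (Fin (n+1)) (Fin n) R) :
    (X * W).det = ∑ j : Fin (n+1),
      (X.submatrix id j.succAbove).det * (W.submatrix j.succAbove id).det := by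
  classical
  have hrows : (X * W) = fun i => ∑ k : Fin (n+1), X i k • W k := by
    funext i j
    simp [Matrix.mul_apply, Finset.sum_apply]
  have step1 : (X * W).det
      = ∑ φ : Fin n → Fin (n+1), Matrix.detRowAlternating (fun i => X i (φ i) • W (φ i)) := by
    rw [show (X * W).det = Matrix.detRowAlternating (X * W) from rfl, hrows]
    exact (Matrix.detRowAlternating :
      (Fin n → R) [⋀^Fin n]→ₗ[R] R).toMultilinearMap.map_sum (fun i k => X i k • W k)
  have step2 : ∀ φ : Fin n → Fin (n+1),
      Matrix.detRowAlternating (fun i => X i (φ i) • W (φ i))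
        = (∏ i, X i (φ i)) * (W.submatrix φ id).det := by
    intro φ
    exact ((Matrix.detRowAlternating :
      (Fin n → R) [⋀^Fin n]→ₗ[R] R).toMultilinearMap.map_smul_univ (fun i => X i (φ i))
      (fun i => W (φ i))).trans (by
        rw [smul_eq_mul]
        rfl)
  rw [step1]
  simp_rw [step2]
  rw [← Finset.sum_filter_add_sum_filter_not Finset.univ (fun φ => Function.Injective φ)]
  have hnoninj : ∑ φ ∈ Finset.univ.filter (fun φ => ¬ Function.Injective φ),
      (∏ i, X i (φ i)) * (W.submatrix φ id).det = 0 := by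
    apply Finset.sum_eq_zero
    intro φ hφ
    rw [Finset.mem_filter] at hφ
    rw [Function.not_injective_iff] at hφ
    obtain ⟨i, j, hij, hne⟩ := hφ.2
    rw [Matrix.det_zero_of_row_eq hne (by funext k; simp [Matrix.submatrix_apply, hij])]
    ring
  rw [hnoninj, add_zero]
  have hbij : ∑ φ ∈ Finset.univ.filter (fun φ => Function.Injective φ),
      (∏ i, X i (φ i)) * (W.submatrix φ id).det
      = ∑ p : Fin (n+1) × Equiv.Perm (Fin n),
          (∏ i, X i (p.1.succAbove (p.2 i))) * (W.submatrix (p.1.succAbove ∘ p.2) id).det := by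
    symm
    apply Finset.sum_nbij (i := fun p : Fin (n+1) × Equiv.Perm (Fin n) => p.1.succAbove ∘ p.2)
    · intro p _
      rw [Finset.mem_filter]
      exact ⟨Finset.mem_univ _, (Fin.succAbove_right_injective).comp p.2.injective⟩
    · intro p _ q _ h
      have hfst : p.1 = q.1 := by
        by_contra hne
        have h1 : ∃ b, p.1.succAbove b = q.1 := Fin.exists_succAbove_eq (Ne.symm hne)
        obtain ⟨b, hb⟩ := h1
        have : p.1.succAbove (p.2 (p.2.symm b)) = q.1.succAbove (q.2 (p.2.symm b)) :=
          congrFun h _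
        rw [Equiv.apply_symm_apply, hb] at this
        exact Fin.succAbove_ne q.1 _ this.symm
      have hsnd : p.2 = q.2 := by
        ext i
        have := congrFun h i
        simp only [Function.comp_apply, hfst] at this
        exact congrArg Fin.val (Fin.succAbove_right_injective this)
      exact Prod.ext hfst hsnd
    · intro φ hφ
      rw [Finset.coe_filter] at hφ
      have hinj : Function.Injective φ := hφ.2
      have hex : ∃ j, ∀ i, φ i ≠ j := by
        by_contra hcon
        push_neg at hcon
        have := Fintype.card_le_of_surjective φ (fun j => hcon j)
        simp at this
      obtain ⟨j, hne⟩ := hex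
      choose σf hσf using fun i => Fin.exists_succAbove_eq (hne i)
      have hσinj : Function.Injective σf := by
        intro a b h
        apply hinj
        rw [← hσf a, ← hσf b, h]
      have hσbij : Function.Bijective σf := Finite.injective_iff_bijective.mp hσinj
      refine ⟨⟨j, Equiv.ofBijective σf hσbij⟩, by simp, ?_⟩
      funext i
      exact hσf i
    · intro p _
      rfl
  rw [hbij, Fintype.sum_prod_type]
  apply Finset.sum_congr rfl
  intro j _
  have hdetX : (X.submatrix id j.succAbove).det
      = ∑ σ : Equiv.Perm (Fin n), (Equiv.Perm.sign σ : R) * ∏ i, X i (j.succAbove (σ i)) := by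
    rw [← Matrix.det_transpose, Matrix.det_apply']
    apply Finset.sum_congr rfl
    intro σ _
    rfl
  rw [hdetX, Finset.sum_mul]
  apply Finset.sum_congr rfl
  intro σ _
  have hperm : (W.submatrix (j.succAbove ∘ σ) id).det
      = (Equiv.Perm.sign σ : R) * (W.submatrix j.succAbove id).det := by
    rw [show W.submatrix (j.succAbove ∘ σ) id = (W.submatrix j.succAbove id).submatrix σ id from
      rfl]
    rw [Matrix.det_permute]
  rw [hperm]
  ring

lemma det_split₁₂ {R : Type*} [CommRing R] (p q : ℕ) (M : Matrix (Fin (p+q)) (Fin (p+q)) R)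
    (h : ∀ i j : Fin (p+q), (i:ℕ) < p → p ≤ (j:ℕ) → M i j = 0) :
    M.det = (Matrix.of fun i j : Fin p => M (Fin.castAdd q i) (Fin.castAdd q j)).det
      * (Matrix.of fun i j : Fin q => M (Fin.natAdd p i) (Fin.natAdd p j)).det := by
  rw [← Matrix.det_submatrix_equiv_self finSumFinEquiv M]
  have hM : M.submatrix finSumFinEquiv finSumFinEquiv
      = Matrix.fromBlocks
          (Matrix.of fun i j : Fin p => M (Fin.castAdd q i) (Fin.castAdd q j))
          0
          (Matrix.of fun (i : Fin q) (j : Fin p) => M (Fin.natAdd p i) (Fin.castAdd q j))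
          (Matrix.of fun i j : Fin q => M (Fin.natAdd p i) (Fin.natAdd p j)) := by
    ext i j
    cases i with
    | inl i =>
      cases j with
      | inl j => simp [Matrix.submatrix_apply]
      | inr j =>
        simp only [Matrix.submatrix_apply, finSumFinEquiv_apply_left, finSumFinEquiv_apply_right,
          Matrix.fromBlocks_apply₁₂, Matrix.zero_apply]
        exact h _ _ (by simp [Fin.is_lt]) (by simp)
    | inr i =>
      cases j with
      | inl j => simp [Matrix.submatrix_apply]
      | inr j => simp [Matrix.submatrix_apply]
  rw [hM, Matrix.det_fromBlocks_zero₁₂]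

lemma det_split₂₁ {R : Type*} [CommRing R] (p q : ℕ) (M : Matrix (Fin (p+q)) (Fin (p+q)) R)
    (h : ∀ i j : Fin (p+q), p ≤ (i:ℕ) → (j:ℕ) < p → M i j = 0) :
    M.det = (Matrix.of fun i j : Fin p => M (Fin.castAdd q i) (Fin.castAdd q j)).det
      * (Matrix.of fun i j : Fin q => M (Fin.natAdd p i) (Fin.natAdd p j)).det := by
  rw [← Matrix.det_submatrix_equiv_self finSumFinEquiv M]
  have hM : M.submatrix finSumFinEquiv finSumFinEquiv
      = Matrix.fromBlocks
          (Matrix.of fun i j : Fin p => M (Fin.castAdd q i) (Fin.castAdd q j))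
          (Matrix.of fun (i : Fin p) (j : Fin q) => M (Fin.castAdd q i) (Fin.natAdd p j))
          0
          (Matrix.of fun i j : Fin q => M (Fin.natAdd p i) (Fin.natAdd p j)) := by
    ext i j
    cases i with
    | inl i =>
      cases j with
      | inl j => simp [Matrix.submatrix_apply]
      | inr j => simp [Matrix.submatrix_apply]
    | inr i =>
      cases j with
      | inl j =>
        simp only [Matrix.submatrix_apply, finSumFinEquiv_apply_left, finSumFinEquiv_apply_right,
          Matrix.fromBlocks_apply₂₁, Matrix.zero_apply]
        exact h _ _ (by simp) (by simp [Fin.is_lt])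
      | inr j => simp [Matrix.submatrix_apply]
  rw [hM, Matrix.det_fromBlocks_zero₂₁]

variable (s t : ℕ → ℝ)

/-- The entries of the band matrix `T + θ`. -/
def ent (θ : ℝ) (k l : ℕ) : ℝ :=
  (if l + 1 = k then 1 else 0) + (if l = k then θ + s k else 0) + (if l = k + 1 then t k else 0)

lemma fpolyShift_zero' (θ : ℝ) (m : ℕ) : fpolyShift s t 0 θ m = fpoly s t θ m := by
  have hs : (fun i => s (i + 0)) = s := by funext i; rw [Nat.add_zero]
  have ht : (fun i => t (i + 0)) = t := by funext i; rw [Nat.add_zero]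
  rw [fpolyShift, hs, ht]

lemma fpolyShift_succ2 (θ : ℝ) (r m : ℕ) :
    fpolyShift s t r θ (m+2)
      = (θ + s (m+1+r)) * fpolyShift s t r θ (m+1) - t (m+r) * fpolyShift s t r θ m := rfl

lemma fpoly_dual (θ : ℝ) : ∀ m r, fpolyShift s t r θ (m+2)
    = (θ + s r) * fpolyShift s t (r+1) θ (m+1) - t r * fpolyShift s t (r+2) θ m
  | 0, r => by
      simp only [fpolyShift, fpoly]
      ring_nf
  | 1, r => by
      simp only [fpolyShift, fpoly]
      ring_nf
  | (m+2), r => by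
      rw [fpolyShift_succ2 s t θ r (m+2)]
      rw [show m+2+1 = (m+1)+2 from rfl, fpoly_dual θ (m+1) r, fpoly_dual θ m r]
      rw [show m+1+1 = m+2 from rfl, fpolyShift_succ2 s t θ (r+1) (m+1),
        fpolyShift_succ2 s t θ (r+2) m]
      ring_nf

lemma coe_succAbove {N : ℕ} (c : Fin (N+1)) (l : Fin N) :
    ((c.succAbove l : Fin (N+1)) : ℕ) = if (l:ℕ) < (c:ℕ) then (l:ℕ) else (l:ℕ)+1 := by
  rw [Fin.succAbove]
  split_ifs with h1 h2 h2
  · rfl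
  · exact absurd (by exact_mod_cast h1) h2
  · exact absurd (by exact_mod_cast h2) h1
  · simp

lemma ent_congr (θ : ℝ) {a b a' b' : ℕ} (ha : a = a') (hb : b = b') :
    ent s t θ a b = ent s t θ a' b' := by rw [ha, hb]

lemma ent_zero (θ : ℝ) {a b : ℕ} (h1 : ¬ b + 1 = a) (h2 : ¬ b = a) (h3 : ¬ b = a + 1) :
    ent s t θ a b = 0 := by
  rw [ent, if_neg h1, if_neg h2, if_neg h3]
  norm_num

lemma det_tri (θ : ℝ) : ∀ (p r : ℕ),
    (Matrix.of fun i j : Fin p => ent s t θ (r + (i:ℕ)) (r + (j:ℕ))).det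
      = fpolyShift s t r θ p
  | 0, r => by
      rw [Matrix.det_fin_zero]
      rfl
  | 1, r => by
      rw [Matrix.det_fin_one]
      simp only [Matrix.of_apply, ent, fpolyShift, fpoly]
      norm_num
  | (p+2), r => by
      rw [Matrix.det_succ_row_zero, Fin.sum_univ_succ, Fin.sum_univ_succ]
      have hzero : ∀ j : Fin p,
          ((-1:ℝ) ^ ((j.succ.succ : Fin (p+2)) : ℕ)
            * (Matrix.of fun i j : Fin (p+2) => ent s t θ (r + (i:ℕ)) (r + (j:ℕ))) 0 j.succ.succ
            * ((Matrix.of fun i j : Fin (p+2) =>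
                ent s t θ (r + (i:ℕ)) (r + (j:ℕ))).submatrix Fin.succ
                  j.succ.succ.succAbove).det) = 0 := by
        intro j
        rw [Matrix.of_apply, ent_zero s t θ
          (by simp only [Fin.val_zero, Fin.val_succ] <;> omega)
          (by simp only [Fin.val_zero, Fin.val_succ] <;> omega)
          (by simp only [Fin.val_zero, Fin.val_succ] <;> omega)]
        ring
      rw [Finset.sum_eq_zero fun j _ => hzero j, add_zero]
      have e00 : (Matrix.of fun i j : Fin (p+2) => ent s t θ (r + (i:ℕ)) (r + (j:ℕ))) 0 0
          = θ + s r := by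
        rw [Matrix.of_apply, ent, if_neg (by simp only [Fin.val_zero] <;> omega),
          if_pos rfl, if_neg (by simp only [Fin.val_zero] <;> omega)]
        norm_num
      have e01 : (Matrix.of fun i j : Fin (p+2) => ent s t θ (r + (i:ℕ)) (r + (j:ℕ))) 0 1
          = t r := by
        rw [Matrix.of_apply, ent, if_neg (by simp only [Fin.val_zero, Fin.val_one] <;> omega),
          if_neg (by simp only [Fin.val_zero, Fin.val_one] <;> omega),
          if_pos (by simp only [Fin.val_zero, Fin.val_one] <;> omega)]
        norm_num
      have hm0 : ((Matrix.of fun i j : Fin (p+2) => ent s t θ (r + (i:ℕ)) (r + (j:ℕ))).submatrix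
            Fin.succ (0 : Fin (p+2)).succAbove)
          = Matrix.of fun i j : Fin (p+1) => ent s t θ ((r+1) + (i:ℕ)) ((r+1) + (j:ℕ)) := by
        ext i j
        rw [Matrix.submatrix_apply, Fin.succAbove_zero, Matrix.of_apply, Matrix.of_apply]
        exact ent_congr s t θ (by simp only [Fin.val_succ] <;> omega) (by
          simp only [Fin.val_succ] <;> omega)
      have hm1 : ((Matrix.of fun i j : Fin (p+2) => ent s t θ (r + (i:ℕ)) (r + (j:ℕ))).submatrix
            Fin.succ (1 : Fin (p+2)).succAbove).det
          = fpolyShift s t (r+2) θ p := by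
        have hcol : ∀ l : Fin (p+1), (((1 : Fin (p+2)).succAbove l : Fin (p+2)) : ℕ)
            = if (l:ℕ) < 1 then (l:ℕ) else (l:ℕ)+1 := by
          intro l
          rw [coe_succAbove]
          rfl
        rw [Matrix.det_succ_column_zero, Fin.sum_univ_succ]
        have hz2 : ∀ i : Fin p,
            ((-1:ℝ) ^ ((i.succ : Fin (p+1)) : ℕ)
              * ((Matrix.of fun i j : Fin (p+2) => ent s t θ (r + (i:ℕ)) (r + (j:ℕ))).submatrix
                  Fin.succ (1 : Fin (p+2)).succAbove) i.succ 0
              * (((Matrix.of fun i j : Fin (p+2) => ent s t θ (r + (i:ℕ)) (r + (j:ℕ))).submatrix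
                  Fin.succ (1 : Fin (p+2)).succAbove).submatrix i.succ.succAbove Fin.succ).det)
              = 0 := by
          intro i
          have hval : (((1 : Fin (p+2)).succAbove (0 : Fin (p+1)) : Fin (p+2)) : ℕ) = 0 := by
            rw [hcol]
            rfl
          have hent : ((Matrix.of fun i j : Fin (p+2) =>
              ent s t θ (r + (i:ℕ)) (r + (j:ℕ))).submatrix
              Fin.succ (1 : Fin (p+2)).succAbove) i.succ 0 = 0 := by
            rw [Matrix.submatrix_apply, Matrix.of_apply]
            exact ent_zero s t θ
              (by rw [hval]; simp only [Fin.val_succ] <;> omega)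
              (by rw [hval]; simp only [Fin.val_succ] <;> omega)
              (by rw [hval]; simp only [Fin.val_succ] <;> omega)
          rw [hent]
          ring
        rw [Finset.sum_eq_zero fun i _ => hz2 i, add_zero]
        have hval : (((1 : Fin (p+2)).succAbove (0 : Fin (p+1)) : Fin (p+2)) : ℕ) = 0 := by
          rw [hcol]
          rfl
        have hc0 : ((Matrix.of fun i j : Fin (p+2) => ent s t θ (r + (i:ℕ)) (r + (j:ℕ))).submatrix
            Fin.succ (1 : Fin (p+2)).succAbove) 0 0 = 1 := by
          rw [Matrix.submatrix_apply, Matrix.of_apply, ent,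
            if_pos (by rw [hval]; simp only [Fin.val_succ, Fin.val_zero] <;> omega),
            if_neg (by rw [hval]; simp only [Fin.val_succ, Fin.val_zero] <;> omega),
            if_neg (by rw [hval]; simp only [Fin.val_succ, Fin.val_zero] <;> omega)]
          norm_num
        have hmm : (((Matrix.of fun i j : Fin (p+2) =>
              ent s t θ (r + (i:ℕ)) (r + (j:ℕ))).submatrix
              Fin.succ (1 : Fin (p+2)).succAbove).submatrix (0 : Fin (p+1)).succAbove Fin.succ)
            = Matrix.of fun i j : Fin p => ent s t θ ((r+2) + (i:ℕ)) ((r+2) + (j:ℕ)) := by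
          ext i j
          simp only [Matrix.submatrix_apply, Matrix.of_apply, Fin.succAbove_zero]
          exact ent_congr s t θ (by simp only [Fin.val_succ] <;> omega)
            (by rw [hcol]; simp only [Fin.val_succ]; rw [if_neg (by omega)]; omega)
        rw [hc0, hmm, det_tri θ p (r+2)]
        norm_num
      rw [show (Fin.succ (0 : Fin (p+1))) = (1 : Fin (p+2)) by ext; simp]
      rw [e00, e01, hm0, hm1, det_tri θ (p+1) (r+1), fpoly_dual s t θ p r]
      simp only [Fin.val_zero, Fin.val_one, pow_zero, pow_one]
      ring

lemma det_split_interval (N p : ℕ) (hp : p ≤ N) (M : Matrix (Fin N) (Fin N) ℝ)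
    (A : Matrix (Fin p) (Fin p) ℝ) (B : Matrix (Fin (N - p)) (Fin (N - p)) ℝ)
    (h : ∀ i j : Fin N, (i:ℕ) < p → p ≤ (j:ℕ) → M i j = 0)
    (hA : ∀ (i j : Fin p) (i' j' : Fin N), (i':ℕ) = (i:ℕ) → (j':ℕ) = (j:ℕ) →
      M i' j' = A i j)
    (hB : ∀ (i j : Fin (N - p)) (i' j' : Fin N), (i':ℕ) = p + (i:ℕ) → (j':ℕ) = p + (j:ℕ) →
      M i' j' = B i j) :
    M.det = A.det * B.det := by
  have hpq : p + (N - p) = N := by omega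
  rw [← Matrix.det_submatrix_equiv_self (finCongr hpq) M]
  rw [det_split₁₂ p (N - p) (M.submatrix (finCongr hpq) (finCongr hpq))
    (by
      intro i j hi hj
      rw [Matrix.submatrix_apply]
      exact h _ _ (by simpa using hi) (by simpa using hj))]
  have hA' : (Matrix.of fun i j : Fin p => (M.submatrix (finCongr hpq) (finCongr hpq))
      (Fin.castAdd (N - p) i) (Fin.castAdd (N - p) j)) = A := by
    ext i j
    rw [Matrix.of_apply, Matrix.submatrix_apply]
    exact hA i j _ _ (by simp) (by simp)
  have hB' : (Matrix.of fun i j : Fin (N - p) => (M.submatrix (finCongr hpq) (finCongr hpq))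
      (Fin.natAdd p i) (Fin.natAdd p j)) = B := by
    ext i j
    rw [Matrix.of_apply, Matrix.submatrix_apply]
    exact hB i j _ _ (by simp) (by simp)
  rw [hA', hB']

lemma det_split_interval' (N p : ℕ) (hp : p ≤ N) (M : Matrix (Fin N) (Fin N) ℝ)
    (A : Matrix (Fin p) (Fin p) ℝ) (B : Matrix (Fin (N - p)) (Fin (N - p)) ℝ)
    (h : ∀ i j : Fin N, p ≤ (i:ℕ) → (j:ℕ) < p → M i j = 0)
    (hA : ∀ (i j : Fin p) (i' j' : Fin N), (i':ℕ) = (i:ℕ) → (j':ℕ) = (j:ℕ) →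
      M i' j' = A i j)
    (hB : ∀ (i j : Fin (N - p)) (i' j' : Fin N), (i':ℕ) = p + (i:ℕ) → (j':ℕ) = p + (j:ℕ) →
      M i' j' = B i j) :
    M.det = A.det * B.det := by
  have hpq : p + (N - p) = N := by omega
  rw [← Matrix.det_submatrix_equiv_self (finCongr hpq) M]
  rw [det_split₂₁ p (N - p) (M.submatrix (finCongr hpq) (finCongr hpq))
    (by
      intro i j hi hj
      rw [Matrix.submatrix_apply]
      exact h _ _ (by simpa using hi) (by simpa using hj))]
  have hA' : (Matrix.of fun i j : Fin p => (M.submatrix (finCongr hpq) (finCongr hpq))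
      (Fin.castAdd (N - p) i) (Fin.castAdd (N - p) j)) = A := by
    ext i j
    rw [Matrix.of_apply, Matrix.submatrix_apply]
    exact hA i j _ _ (by simp) (by simp)
  have hB' : (Matrix.of fun i j : Fin (N - p) => (M.submatrix (finCongr hpq) (finCongr hpq))
      (Fin.natAdd p i) (Fin.natAdd p j)) = B := by
    ext i j
    rw [Matrix.of_apply, Matrix.submatrix_apply]
    exact hB i j _ _ (by simp) (by simp)
  rw [hA', hB']

lemma det_tri_triv (θ : ℝ) (p r : ℕ) (A : Matrix (Fin p) (Fin p) ℝ)
    (hA : ∀ i j : Fin p, A i j = ent s t θ (r + (i:ℕ)) (r + (j:ℕ))) :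
    A.det = fpolyShift s t r θ p := by
  rw [show A = Matrix.of fun i j : Fin p => ent s t θ (r + (i:ℕ)) (r + (j:ℕ)) by
    ext i j; rw [hA, Matrix.of_apply]]
  exact det_tri s t θ p r

lemma det_lowerTri_t (θ : ℝ) (p r : ℕ) (A : Matrix (Fin p) (Fin p) ℝ)
    (hA : ∀ i j : Fin p, A i j = ent s t θ (r + (i:ℕ)) (r + (j:ℕ) + 1)) :
    A.det = ∏ ℓ ∈ Finset.Ico r (r + p), t ℓ := by
  have hlt : A.BlockTriangular OrderDual.toDual := by
    intro i j hij
    have hij' : (i:ℕ) < (j:ℕ) := by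
      have : i < j := hij
      exact this
    rw [hA]
    exact ent_zero s t θ (by omega) (by omega) (by omega)
  rw [Matrix.det_of_lowerTriangular A hlt]
  have hdiag : ∀ i : Fin p, A i i = t (r + (i:ℕ)) := by
    intro i
    rw [hA, ent, if_neg (by omega), if_neg (by omega), if_pos rfl]
    norm_num
  rw [Finset.prod_congr rfl (fun i _ => hdiag i), Finset.prod_Ico_eq_prod_range]
  rw [show r + p - r = p by omega]
  rw [← Fin.prod_univ_eq_prod_range (fun i => t (r + i)) p]

lemma det_upperTri_one (θ : ℝ) (p r : ℕ) (A : Matrix (Fin p) (Fin p) ℝ)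
    (hA : ∀ i j : Fin p, A i j = ent s t θ (r + (i:ℕ) + 1) (r + (j:ℕ))) :
    A.det = 1 := by
  have hut : A.BlockTriangular id := by
    intro i j hij
    have hij' : (j:ℕ) < (i:ℕ) := hij
    rw [hA]
    exact ent_zero s t θ (by omega) (by omega) (by omega)
  rw [Matrix.det_of_upperTriangular hut]
  have hdiag : ∀ i : Fin p, A i i = 1 := by
    intro i
    rw [hA, ent, if_pos (by omega), if_neg (by omega), if_neg (by omega)]
    norm_num
  rw [Finset.prod_congr rfl (fun i _ => hdiag i), Finset.prod_const_one]

lemma det_minor_X (n : ℕ) (θ : ℝ) (j₀ : Fin (n+1)) :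
    ((Matrix.of fun (k : Fin n) (l : Fin (n+1)) => ent s t θ (k:ℕ) (l:ℕ)).submatrix id
      j₀.succAbove).det
    = fpoly s t θ (j₀:ℕ) * ∏ ℓ ∈ Finset.Ico (j₀:ℕ) n, t ℓ := by
  have hp : (j₀:ℕ) ≤ n := Fin.is_le j₀
  rw [det_split_interval n (j₀:ℕ) hp _
    (Matrix.of fun i j : Fin (j₀:ℕ) => ent s t θ (0 + (i:ℕ)) (0 + (j:ℕ)))
    (Matrix.of fun i j : Fin (n - (j₀:ℕ)) =>
      ent s t θ ((j₀:ℕ) + (i:ℕ)) ((j₀:ℕ) + (j:ℕ) + 1))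
    (by
      intro i j hi hj
      rw [Matrix.submatrix_apply, id_eq, Matrix.of_apply, coe_succAbove, if_neg (by omega)]
      exact ent_zero s t θ (by omega) (by omega) (by omega))
    (by
      intro i j i' j' hi hj
      rw [Matrix.submatrix_apply, id_eq, Matrix.of_apply, coe_succAbove,
        if_pos (by omega), hi, hj, Matrix.of_apply]
      exact ent_congr s t θ (by omega) (by omega))
    (by
      intro i j i' j' hi hj
      rw [Matrix.submatrix_apply, id_eq, Matrix.of_apply, coe_succAbove,
        if_neg (by omega), hi, hj, Matrix.of_apply])]
  rw [det_tri_triv s t θ (j₀:ℕ) 0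
      (Matrix.of fun i j : Fin (j₀:ℕ) => ent s t θ (0 + (i:ℕ)) (0 + (j:ℕ)))
      (fun i j => rfl), fpolyShift_zero',
    det_lowerTri_t s t θ (n - (j₀:ℕ)) (j₀:ℕ)
      (Matrix.of fun i j : Fin (n - (j₀:ℕ)) => ent s t θ ((j₀:ℕ) + (i:ℕ)) ((j₀:ℕ) + (j:ℕ) + 1))
      (fun i j => rfl)]
  rw [show (j₀:ℕ) + (n - (j₀:ℕ)) = n by omega]

lemma det_minor_Z (n : ℕ) (θ : ℝ) (a : Fin (n+1)) :
    ((Matrix.of fun (m : Fin (n+1)) (j : Fin n) => ent s t θ (m:ℕ) (j:ℕ)).submatrix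
      a.succAbove id).det
    = fpoly s t θ (a:ℕ) := by
  have hp : (a:ℕ) ≤ n := Fin.is_le a
  rw [det_split_interval' n (a:ℕ) hp _
    (Matrix.of fun i j : Fin (a:ℕ) => ent s t θ (0 + (i:ℕ)) (0 + (j:ℕ)))
    (Matrix.of fun i j : Fin (n - (a:ℕ)) =>
      ent s t θ ((a:ℕ) + (i:ℕ) + 1) ((a:ℕ) + (j:ℕ)))
    (by
      intro i j hi hj
      rw [Matrix.submatrix_apply, id_eq, Matrix.of_apply, coe_succAbove, if_neg (by omega)]
      exact ent_zero s t θ (by omega) (by omega) (by omega))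
    (by
      intro i j i' j' hi hj
      rw [Matrix.submatrix_apply, id_eq, Matrix.of_apply, coe_succAbove,
        if_pos (by omega), hi, hj, Matrix.of_apply]
      exact ent_congr s t θ (by omega) (by omega))
    (by
      intro i j i' j' hi hj
      rw [Matrix.submatrix_apply, id_eq, Matrix.of_apply, coe_succAbove,
        if_neg (by omega), hi, hj, Matrix.of_apply])]
  rw [det_tri_triv s t θ (a:ℕ) 0
      (Matrix.of fun i j : Fin (a:ℕ) => ent s t θ (0 + (i:ℕ)) (0 + (j:ℕ)))
      (fun i j => rfl), fpolyShift_zero',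
    det_upperTri_one s t θ (n - (a:ℕ)) (a:ℕ)
      (Matrix.of fun i j : Fin (n - (a:ℕ)) => ent s t θ ((a:ℕ) + (i:ℕ) + 1) ((a:ℕ) + (j:ℕ)))
      (fun i j => rfl)]
  ring

lemma det_minor_Y (n : ℕ) (θ : ℝ) (j₀ a : Fin (n+1)) :
    ((Matrix.of fun (l m : Fin (n+1)) => ent s t θ (l:ℕ) (m:ℕ)).submatrix j₀.succAbove
      a.succAbove).det
    = if (a:ℕ) ≤ (j₀:ℕ) then
        fpoly s t θ (a:ℕ) * (∏ ℓ ∈ Finset.Ico (a:ℕ) (j₀:ℕ), t ℓ)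
          * fpolyShift s t ((j₀:ℕ)+1) θ (n - (j₀:ℕ))
      else fpoly s t θ (j₀:ℕ) * fpolyShift s t ((a:ℕ)+1) θ (n - (a:ℕ)) := by
  have hj₀ : (j₀:ℕ) ≤ n := Fin.is_le j₀
  have ha : (a:ℕ) ≤ n := Fin.is_le a
  by_cases hc : (a:ℕ) ≤ (j₀:ℕ)
  · rw [if_pos hc]
    rw [det_split_interval n (a:ℕ) ha _
      (Matrix.of fun i j : Fin (a:ℕ) => ent s t θ (0 + (i:ℕ)) (0 + (j:ℕ)))
      (Matrix.of fun i j : Fin (n - (a:ℕ)) =>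
        ent s t θ (if (a:ℕ) + (i:ℕ) < (j₀:ℕ) then (a:ℕ) + (i:ℕ) else (a:ℕ) + (i:ℕ) + 1)
          ((a:ℕ) + (j:ℕ) + 1))
      (by
        intro i j hi hj
        rw [Matrix.submatrix_apply, Matrix.of_apply, coe_succAbove j₀ i, coe_succAbove a j,
          if_pos (by omega), if_neg (by omega)]
        exact ent_zero s t θ (by omega) (by omega) (by omega))
      (by
        intro i j i' j' hi hj
        rw [Matrix.submatrix_apply, Matrix.of_apply, coe_succAbove j₀ i', coe_succAbove a j',
          if_pos (by omega), if_pos (by omega), hi, hj, Matrix.of_apply]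
        exact ent_congr s t θ (by omega) (by omega))
      (by
        intro i j i' j' hi hj
        rw [Matrix.submatrix_apply, Matrix.of_apply, coe_succAbove j₀ i', coe_succAbove a j',
          if_neg (show ¬ (j':ℕ) < (a:ℕ) by omega), hi, hj, Matrix.of_apply])]
    rw [det_tri_triv s t θ (a:ℕ) 0
        (Matrix.of fun i j : Fin (a:ℕ) => ent s t θ (0 + (i:ℕ)) (0 + (j:ℕ)))
        (fun i j => rfl), fpolyShift_zero']
    rw [det_split_interval (n - (a:ℕ)) ((j₀:ℕ) - (a:ℕ)) (by omega) _
      (Matrix.of fun i j : Fin ((j₀:ℕ) - (a:ℕ)) =>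
        ent s t θ ((a:ℕ) + (i:ℕ)) ((a:ℕ) + (j:ℕ) + 1))
      (Matrix.of fun i j : Fin ((n - (a:ℕ)) - ((j₀:ℕ) - (a:ℕ))) =>
        ent s t θ ((j₀:ℕ)+1 + (i:ℕ)) ((j₀:ℕ)+1 + (j:ℕ)))
      (by
        intro i j hi hj
        rw [Matrix.of_apply, if_pos (by omega)]
        exact ent_zero s t θ (by omega) (by omega) (by omega))
      (by
        intro i j i' j' hi hj
        rw [Matrix.of_apply, if_pos (by omega), hi, hj, Matrix.of_apply])
      (by
        intro i j i' j' hi hj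
        rw [Matrix.of_apply, if_neg (by omega), hi, hj, Matrix.of_apply]
        exact ent_congr s t θ (by omega) (by omega))]
    rw [det_lowerTri_t s t θ ((j₀:ℕ) - (a:ℕ)) (a:ℕ)
        (Matrix.of fun i j : Fin ((j₀:ℕ) - (a:ℕ)) =>
          ent s t θ ((a:ℕ) + (i:ℕ)) ((a:ℕ) + (j:ℕ) + 1))
        (fun i j => rfl)]
    rw [det_tri_triv s t θ ((n - (a:ℕ)) - ((j₀:ℕ) - (a:ℕ))) ((j₀:ℕ)+1)
        (Matrix.of fun i j : Fin ((n - (a:ℕ)) - ((j₀:ℕ) - (a:ℕ))) =>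
          ent s t θ ((j₀:ℕ)+1 + (i:ℕ)) ((j₀:ℕ)+1 + (j:ℕ)))
        (fun i j => rfl)]
    rw [show (a:ℕ) + ((j₀:ℕ) - (a:ℕ)) = (j₀:ℕ) by omega,
      show (n - (a:ℕ)) - ((j₀:ℕ) - (a:ℕ)) = n - (j₀:ℕ) by omega]
    ring
  · rw [if_neg hc]
    rw [det_split_interval' n (j₀:ℕ) hj₀ _
      (Matrix.of fun i j : Fin (j₀:ℕ) => ent s t θ (0 + (i:ℕ)) (0 + (j:ℕ)))
      (Matrix.of fun i j : Fin (n - (j₀:ℕ)) =>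
        ent s t θ ((j₀:ℕ) + (i:ℕ) + 1)
          (if (j₀:ℕ) + (j:ℕ) < (a:ℕ) then (j₀:ℕ) + (j:ℕ) else (j₀:ℕ) + (j:ℕ) + 1))
      (by
        intro i j hi hj
        rw [Matrix.submatrix_apply, Matrix.of_apply, coe_succAbove j₀ i, coe_succAbove a j,
          if_neg (show ¬ (i:ℕ) < (j₀:ℕ) by omega), if_pos (by omega)]
        exact ent_zero s t θ (by omega) (by omega) (by omega))
      (by
        intro i j i' j' hi hj
        rw [Matrix.submatrix_apply, Matrix.of_apply, coe_succAbove j₀ i', coe_succAbove a j',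
          if_pos (by omega), if_pos (by omega), hi, hj, Matrix.of_apply]
        exact ent_congr s t θ (by omega) (by omega))
      (by
        intro i j i' j' hi hj
        rw [Matrix.submatrix_apply, Matrix.of_apply, coe_succAbove j₀ i', coe_succAbove a j',
          if_neg (show ¬ (i':ℕ) < (j₀:ℕ) by omega), hi, hj, Matrix.of_apply])]
    rw [det_tri_triv s t θ (j₀:ℕ) 0
        (Matrix.of fun i j : Fin (j₀:ℕ) => ent s t θ (0 + (i:ℕ)) (0 + (j:ℕ)))
        (fun i j => rfl), fpolyShift_zero']
    rw [det_split_interval' (n - (j₀:ℕ)) ((a:ℕ) - (j₀:ℕ)) (by omega) _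
      (Matrix.of fun i j : Fin ((a:ℕ) - (j₀:ℕ)) =>
        ent s t θ ((j₀:ℕ) + (i:ℕ) + 1) ((j₀:ℕ) + (j:ℕ)))
      (Matrix.of fun i j : Fin ((n - (j₀:ℕ)) - ((a:ℕ) - (j₀:ℕ))) =>
        ent s t θ ((a:ℕ)+1 + (i:ℕ)) ((a:ℕ)+1 + (j:ℕ)))
      (by
        intro i j hi hj
        rw [Matrix.of_apply, if_pos (by omega)]
        exact ent_zero s t θ (by omega) (by omega) (by omega))
      (by
        intro i j i' j' hi hj
        rw [Matrix.of_apply, if_pos (by omega), hi, hj, Matrix.of_apply])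
      (by
        intro i j i' j' hi hj
        rw [Matrix.of_apply, if_neg (by omega), hi, hj, Matrix.of_apply]
        exact ent_congr s t θ (by omega) (by omega))]
    rw [det_upperTri_one s t θ ((a:ℕ) - (j₀:ℕ)) (j₀:ℕ)
        (Matrix.of fun i j : Fin ((a:ℕ) - (j₀:ℕ)) =>
          ent s t θ ((j₀:ℕ) + (i:ℕ) + 1) ((j₀:ℕ) + (j:ℕ)))
        (fun i j => rfl)]
    rw [det_tri_triv s t θ ((n - (j₀:ℕ)) - ((a:ℕ) - (j₀:ℕ))) ((a:ℕ)+1)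
        (Matrix.of fun i j : Fin ((n - (j₀:ℕ)) - ((a:ℕ) - (j₀:ℕ))) =>
          ent s t θ ((a:ℕ)+1 + (i:ℕ)) ((a:ℕ)+1 + (j:ℕ)))
        (fun i j => rfl)]
    rw [show (n - (j₀:ℕ)) - ((a:ℕ) - (j₀:ℕ)) = n - (a:ℕ) by omega]
    ring


/-! ### Matrices for the factorisation -/

def Amat (n : ℕ) : Matrix (Fin n) (Fin n) ℝ := Matrix.of fun i k => msh s t (i:ℕ) (k:ℕ)

def Dmat (n : ℕ) : Matrix (Fin n) (Fin n) ℝ := Matrix.diagonal (fun k : Fin n => pt t (k:ℕ))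

def Bfun (α β γ : ℝ) (i : ℕ) : ℤ → ℝ := aff s t α (aff s t β (aff s t γ (motzkinGF s t i)))

def Bmat (n : ℕ) (α β γ : ℝ) : Matrix (Fin n) (Fin n) ℝ :=
  Matrix.of fun j k => Bfun s t α β γ (j:ℕ) ((k:ℕ):ℤ)

def Btilde (n : ℕ) (α β γ : ℝ) : Matrix (Fin n) (Fin n) ℝ :=
  Matrix.of fun j k => aff s t α (aff s t β (aff s t γ (deltaF (j:ℕ)))) ((k:ℕ):ℤ)

def Lmat (n : ℕ) : Matrix (Fin n) (Fin n) ℝ := Matrix.of fun j i => Lc s t (j:ℕ) (i:ℕ)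

def Xmat (n : ℕ) (θ : ℝ) : Matrix (Fin n) (Fin (n+1)) ℝ :=
  Matrix.of fun k l => ent s t θ (k:ℕ) (l:ℕ)

def Ymat (n : ℕ) (θ : ℝ) : Matrix (Fin (n+1)) (Fin (n+1)) ℝ :=
  Matrix.of fun l m => ent s t θ (l:ℕ) (m:ℕ)

def Zmat (n : ℕ) (θ : ℝ) : Matrix (Fin (n+1)) (Fin n) ℝ :=
  Matrix.of fun m j => ent s t θ (m:ℕ) (j:ℕ)

lemma det_Amat (n : ℕ) : (Amat s t n).det = 1 := by
  have h : (Amat s t n).BlockTriangular OrderDual.toDual := by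
    intro i j hij
    exact msh_gt s t (show (i:ℕ) < (j:ℕ) from hij)
  rw [Matrix.det_of_lowerTriangular _ h]
  exact Finset.prod_eq_one fun i _ => msh_self s t (i:ℕ)

lemma det_Lmat (n : ℕ) : (Lmat s t n).det = 1 := by
  have h : (Lmat s t n).BlockTriangular OrderDual.toDual := by
    intro i j hij
    exact Lc_gt s t (i:ℕ) (j:ℕ) (show (i:ℕ) < (j:ℕ) from hij)
  rw [Matrix.det_of_lowerTriangular _ h]
  exact Finset.prod_eq_one fun i _ => Lc_self s t (i:ℕ)

lemma Btilde_eq_mul (n : ℕ) (α β γ : ℝ) :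
    Btilde s t n α β γ = Lmat s t n * Bmat s t n α β γ := by
  ext j k
  rw [Matrix.mul_apply]
  symm
  calc ∑ i : Fin n, Lmat s t n j i * Bmat s t n α β γ i k
      = ∑ i ∈ Finset.range n,
          Lc s t (j:ℕ) i * aff s t α (aff s t β (aff s t γ (motzkinGF s t i))) ((k:ℕ):ℤ) :=
        Fin.sum_univ_eq_sum_range
          (fun m => Lc s t (j:ℕ) m
            * aff s t α (aff s t β (aff s t γ (motzkinGF s t m))) ((k:ℕ):ℤ)) n
    _ = aff s t α (aff s t β (aff s t γ (deltaF (j:ℕ)))) ((k:ℕ):ℤ) :=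
        rowop s t n (j:ℕ) j.isLt α β γ ((k:ℕ):ℤ)
    _ = Btilde s t n α β γ j k := rfl

lemma det_Bmat_eq_det_Btilde (n : ℕ) (α β γ : ℝ) :
    (Bmat s t n α β γ).det = (Btilde s t n α β γ).det := by
  rw [Btilde_eq_mul s t n α β γ, Matrix.det_mul, det_Lmat, one_mul]

/-! ### band-matrix application lemmas -/

lemma fin_sum_ite (N c : ℕ) (f : ℝ) (v : ℕ → ℝ) :
    ∑ l : Fin N, (if (l:ℕ) = c then f else 0) * v (l:ℕ)
      = if c < N then f * v c else 0 := by
  by_cases hc : c < N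
  · rw [if_pos hc, Finset.sum_eq_single (⟨c, hc⟩ : Fin N)]
    · rw [if_pos rfl]
    · intro l _ hl
      rw [if_neg (fun h => hl (Fin.ext h)), zero_mul]
    · intro h
      exact absurd (Finset.mem_univ _) h
  · rw [if_neg hc]
    apply Finset.sum_eq_zero
    intro l _
    rw [if_neg (by omega), zero_mul]

lemma fin_sum_ite_pred (N k : ℕ) (v : ℕ → ℝ) :
    ∑ l : Fin N, (if (l:ℕ)+1 = k then (1:ℝ) else 0) * v (l:ℕ)
      = if 1 ≤ k ∧ k - 1 < N then v (k-1) else 0 := by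
  by_cases hk : 1 ≤ k ∧ k - 1 < N
  · rw [if_pos hk]
    have hcongr : ∀ l : Fin N, (if (l:ℕ)+1 = k then (1:ℝ) else 0) * v (l:ℕ)
        = (if (l:ℕ) = k-1 then (1:ℝ) else 0) * v (l:ℕ) := by
      intro l
      by_cases hl : (l:ℕ)+1 = k
      · rw [if_pos hl, if_pos (by omega)]
      · rw [if_neg hl, if_neg (by omega)]
    rw [Finset.sum_congr rfl fun l _ => hcongr l, fin_sum_ite, if_pos hk.2, one_mul]
  · rw [if_neg hk]
    apply Finset.sum_eq_zero
    intro l _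
    rw [if_neg (by have := l.isLt; omega), zero_mul]

lemma sum_ent_row (N : ℕ) (θ : ℝ) (u : ℤ → ℝ) (hneg : ∀ x : ℤ, x < 0 → u x = 0)
    (k : ℕ) (hk : k < N) (htop : k + 1 = N → u ((k:ℕ)+1) = 0) :
    ∑ l : Fin N, ent s t θ k (l:ℕ) * u ((l:ℕ):ℤ) = aff s t θ u (k:ℤ) := by
  have expand : ∀ l : Fin N, ent s t θ k (l:ℕ) * u ((l:ℕ):ℤ)
      = (if (l:ℕ)+1 = k then (1:ℝ) else 0) * u ((l:ℕ):ℤ)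
        + (if (l:ℕ) = k then θ + s k else 0) * u ((l:ℕ):ℤ)
        + (if (l:ℕ) = k+1 then t k else 0) * u ((l:ℕ):ℤ) := by
    intro l
    rw [ent]
    ring
  rw [Finset.sum_congr rfl fun l _ => expand l, Finset.sum_add_distrib,
    Finset.sum_add_distrib]
  rw [fin_sum_ite_pred N k (fun m => u (m:ℤ)), fin_sum_ite N k _ (fun m => u (m:ℤ)),
    fin_sum_ite N (k+1) _ (fun m => u (m:ℤ)), if_pos hk]
  have haff : aff s t θ u (k:ℤ) = u ((k:ℤ)-1) + s k * u (k:ℤ) + t k * u ((k:ℤ)+1)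
      + θ * u (k:ℤ) := by
    rw [aff, Tstep, if_neg (by omega)]
    rw [show ((k:ℤ)).toNat = k by omega]
  rw [haff]
  by_cases h2 : k + 1 < N
  · rw [if_pos h2]
    by_cases h1 : 1 ≤ k
    · rw [if_pos (show 1 ≤ k ∧ k - 1 < N by omega),
        show (k:ℤ) - 1 = ((k-1:ℕ):ℤ) by omega]
      push_cast
      ring
    · rw [if_neg (by omega), hneg ((k:ℤ)-1) (by omega)]
      push_cast
      ring
  · have h0 : u ((k:ℤ)+1) = 0 := htop (by omega)
    rw [if_neg h2, h0]
    by_cases h1 : 1 ≤ k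
    · rw [if_pos (show 1 ≤ k ∧ k - 1 < N by omega),
        show (k:ℤ) - 1 = ((k-1:ℕ):ℤ) by omega]
      ring
    · rw [if_neg (by omega), hneg ((k:ℤ)-1) (by omega)]
      ring

lemma deltaF_neg (j : ℕ) : ∀ x : ℤ, x < 0 → deltaF j x = 0 := by
  intro x hx
  rw [deltaF, if_neg (by omega)]

lemma aff_neg (θ : ℝ) (u : ℤ → ℝ) (h : ∀ x : ℤ, x < 0 → u x = 0) :
    ∀ x : ℤ, x < 0 → aff s t θ u x = 0 := by
  intro x hx
  rw [aff, Tstep, if_pos hx, h x hx]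
  ring

lemma ent_aff_delta (n : ℕ) (γ : ℝ) (j : Fin n) (m : Fin (n+1)) :
    ent s t γ (m:ℕ) (j:ℕ) = aff s t γ (deltaF (j:ℕ)) ((m:ℕ):ℤ) := by
  rw [aff, Tstep, if_neg (by omega), show (((m:ℕ):ℤ)).toNat = (m:ℕ) by omega]
  simp only [deltaF, ent]
  split_ifs <;> first | (exfalso; omega) | ring

lemma aff_delta_top (n : ℕ) (γ : ℝ) (j : Fin n) :
    aff s t γ (deltaF (j:ℕ)) (((n:ℕ)+1:ℕ):ℤ) = 0 := by
  have hj := j.isLt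
  simp only [aff, Tstep, deltaF]
  split_ifs <;> first | (exfalso; omega) | ring

lemma YZ_entry (n : ℕ) (β γ : ℝ) (j : Fin n) (l : Fin (n+1)) :
    (Ymat s t n β * Zmat s t n γ) l j
      = aff s t β (aff s t γ (deltaF (j:ℕ))) ((l:ℕ):ℤ) := by
  rw [Matrix.mul_apply]
  have hent : ∀ m : Fin (n+1), Ymat s t n β l m * Zmat s t n γ m j
      = ent s t β (l:ℕ) (m:ℕ) * aff s t γ (deltaF (j:ℕ)) ((m:ℕ):ℤ) := by
    intro m
    rw [Ymat, Zmat, Matrix.of_apply, Matrix.of_apply, ent_aff_delta]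
  rw [Finset.sum_congr rfl fun m _ => hent m]
  exact sum_ent_row s t (n+1) β _ (aff_neg s t γ _ (deltaF_neg (j:ℕ))) (l:ℕ) l.isLt
    (fun h => by
      rw [show ((l:ℕ):ℤ) + 1 = (((n:ℕ)+1:ℕ):ℤ) by omega]
      exact aff_delta_top s t n γ j)

lemma Btilde_entry (n : ℕ) (α β γ : ℝ) (j k : Fin n) :
    Btilde s t n α β γ j k = (Xmat s t n α * (Ymat s t n β * Zmat s t n γ)) k j := by
  rw [Matrix.mul_apply]
  have hent : ∀ l : Fin (n+1),
      Xmat s t n α k l * (Ymat s t n β * Zmat s t n γ) l j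
        = ent s t α (k:ℕ) (l:ℕ) * aff s t β (aff s t γ (deltaF (j:ℕ))) ((l:ℕ):ℤ) := by
    intro l
    rw [Xmat, Matrix.of_apply, YZ_entry]
  rw [Finset.sum_congr rfl fun l _ => hent l]
  rw [sum_ent_row s t (n+1) α _
    (aff_neg s t β _ (aff_neg s t γ _ (deltaF_neg (j:ℕ)))) (k:ℕ)
    (by omega) (fun h => absurd h (by have := k.isLt; omega))]
  rfl


lemma det_Btilde (n : ℕ) (α β γ : ℝ) :
    (Btilde s t n α β γ).det
      = ∑ j₀ : Fin (n+1), ∑ a : Fin (n+1),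
          (fpoly s t α (j₀:ℕ) * ∏ ℓ ∈ Finset.Ico (j₀:ℕ) n, t ℓ)
          * ((if (a:ℕ) ≤ (j₀:ℕ) then
                fpoly s t β (a:ℕ) * (∏ ℓ ∈ Finset.Ico (a:ℕ) (j₀:ℕ), t ℓ)
                  * fpolyShift s t ((j₀:ℕ)+1) β (n - (j₀:ℕ))
              else fpoly s t β (j₀:ℕ) * fpolyShift s t ((a:ℕ)+1) β (n - (a:ℕ)))
            * fpoly s t γ (a:ℕ)) := by
  have hBt : Btilde s t n α β γ = (Xmat s t n α * (Ymat s t n β * Zmat s t n γ))ᵀ := by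
    ext j k
    rw [Matrix.transpose_apply]
    exact Btilde_entry s t n α β γ j k
  rw [hBt, Matrix.det_transpose,
    cauchyBinet_succ n (Xmat s t n α) (Ymat s t n β * Zmat s t n γ)]
  apply Finset.sum_congr rfl
  intro j₀ _
  have hsub : (Ymat s t n β * Zmat s t n γ).submatrix j₀.succAbove id
      = (Ymat s t n β).submatrix j₀.succAbove id * Zmat s t n γ := by
    ext l j
    rw [Matrix.submatrix_apply, Matrix.mul_apply, Matrix.mul_apply]
    rfl
  rw [hsub, cauchyBinet_succ n ((Ymat s t n β).submatrix j₀.succAbove id) (Zmat s t n γ),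
    Finset.mul_sum]
  apply Finset.sum_congr rfl
  intro a _
  have h2 : ((Ymat s t n β).submatrix j₀.succAbove id).submatrix id a.succAbove
      = (Ymat s t n β).submatrix j₀.succAbove a.succAbove := rfl
  rw [h2]
  rw [show Xmat s t n α = Matrix.of fun (k : Fin n) (l : Fin (n+1)) => ent s t α (k:ℕ) (l:ℕ)
      from rfl,
    show Ymat s t n β = Matrix.of fun (l m : Fin (n+1)) => ent s t β (l:ℕ) (m:ℕ) from rfl,
    show Zmat s t n γ = Matrix.of fun (m : Fin (n+1)) (j : Fin n) => ent s t γ (m:ℕ) (j:ℕ)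
      from rfl]
  rw [det_minor_X s t n α j₀, det_minor_Y s t n β j₀ a, det_minor_Z s t n γ a]

lemma Bfun_expand (α β γ : ℝ) (j k : ℕ) :
    Bfun s t α β γ j ((k:ℕ):ℤ)
      = α*β*γ * msh s t j k + (α*β+β*γ+γ*α) * msh s t (j+1) k
        + (α+β+γ) * msh s t (j+2) k + msh s t (j+3) k := by
  rw [Bfun, aff3_motzkin s t α β γ j ((k:ℕ):ℤ)]
  simp only [msh]

lemma LHS_entry (n : ℕ) (α β γ : ℝ) (i j : Fin n) :
    (Amat s t n * Dmat t n * (Bmat s t n α β γ)ᵀ) i j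
      = α * β * γ * motzkinGF s t ((i:ℕ) + (j:ℕ)) 0
        + (α * β + β * γ + γ * α) * motzkinGF s t ((i:ℕ) + (j:ℕ) + 1) 0
        + (α + β + γ) * motzkinGF s t ((i:ℕ) + (j:ℕ) + 2) 0
        + motzkinGF s t ((i:ℕ) + (j:ℕ) + 3) 0 := by
  rw [Matrix.mul_apply]
  have hterm : ∀ k : Fin n, (Amat s t n * Dmat t n) i k * (Bmat s t n α β γ)ᵀ k j
      = α*β*γ * (pt t (k:ℕ) * (msh s t (i:ℕ) (k:ℕ) * msh s t (j:ℕ) (k:ℕ)))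
        + (α*β+β*γ+γ*α) * (pt t (k:ℕ) * (msh s t (i:ℕ) (k:ℕ) * msh s t ((j:ℕ)+1) (k:ℕ)))
        + (α+β+γ) * (pt t (k:ℕ) * (msh s t (i:ℕ) (k:ℕ) * msh s t ((j:ℕ)+2) (k:ℕ)))
        + (pt t (k:ℕ) * (msh s t (i:ℕ) (k:ℕ) * msh s t ((j:ℕ)+3) (k:ℕ))) := by
    intro k
    rw [Dmat, Matrix.mul_diagonal, Matrix.transpose_apply, Bmat, Matrix.of_apply, Bfun_expand,
      Amat, Matrix.of_apply]
    ring
  rw [Finset.sum_congr rfl fun k _ => hterm k, Finset.sum_add_distrib, Finset.sum_add_distrib,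
    Finset.sum_add_distrib, ← Finset.mul_sum, ← Finset.mul_sum, ← Finset.mul_sum]
  have hs : ∀ b : ℕ, ∑ k : Fin n, pt t (k:ℕ) * (msh s t (i:ℕ) (k:ℕ) * msh s t b (k:ℕ))
      = msh s t ((i:ℕ) + b) 0 := by
    intro b
    rw [Fin.sum_univ_eq_sum_range (fun m => pt t m * (msh s t (i:ℕ) m * msh s t b m)) n]
    exact splitS s t n (i:ℕ) b i.isLt
  rw [hs (j:ℕ), hs ((j:ℕ)+1), hs ((j:ℕ)+2), hs ((j:ℕ)+3),
    show (i:ℕ) + ((j:ℕ)+1) = (i:ℕ)+(j:ℕ)+1 by omega,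
    show (i:ℕ) + ((j:ℕ)+2) = (i:ℕ)+(j:ℕ)+2 by omega,
    show (i:ℕ) + ((j:ℕ)+3) = (i:ℕ)+(j:ℕ)+3 by omega]
  simp only [msh, Nat.cast_zero]

lemma H_entry (n : ℕ) (i j : Fin n) :
    (Amat s t n * Dmat t n * (Amat s t n)ᵀ) i j = motzkinGF s t ((i:ℕ)+(j:ℕ)) 0 := by
  rw [Matrix.mul_apply]
  have hterm : ∀ k : Fin n, (Amat s t n * Dmat t n) i k * (Amat s t n)ᵀ k j
      = pt t (k:ℕ) * (msh s t (i:ℕ) (k:ℕ) * msh s t (j:ℕ) (k:ℕ)) := by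
    intro k
    rw [Dmat, Matrix.mul_diagonal, Matrix.transpose_apply, Amat, Matrix.of_apply,
      Matrix.of_apply]
    ring
  rw [Finset.sum_congr rfl fun k _ => hterm k,
    Fin.sum_univ_eq_sum_range (fun m => pt t m * (msh s t (i:ℕ) m * msh s t (j:ℕ) m)) n,
    splitS s t n (i:ℕ) (j:ℕ) i.isLt]
  simp only [msh, Nat.cast_zero]

lemma sum_triangle_swap (N : ℕ) (f : ℕ → ℕ → ℝ) :
    ∑ j ∈ Finset.range N, ∑ a ∈ Finset.Ico (j+1) N, f j a
      = ∑ a ∈ Finset.range N, ∑ j ∈ Finset.range a, f j a := by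
  have h1 : ∀ j ∈ Finset.range N, ∑ a ∈ Finset.Ico (j+1) N, f j a
      = ∑ a ∈ Finset.range N, if j < a then f j a else 0 := by
    intro j _
    rw [← Finset.sum_filter]
    congr 1
    ext x
    simp only [Finset.mem_filter, Finset.mem_Ico, Finset.mem_range]
    omega
  have h2 : ∀ a ∈ Finset.range N, ∑ j ∈ Finset.range a, f j a
      = ∑ j ∈ Finset.range N, if j < a then f j a else 0 := by
    intro a ha
    rw [← Finset.sum_filter]
    congr 1
    ext x
    simp only [Finset.mem_filter, Finset.mem_range] at *
    omega
  rw [Finset.sum_congr rfl h1, Finset.sum_congr rfl h2, Finset.sum_comm]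


lemma cb_sum_eq (n : ℕ) (α β γ : ℝ) :
    (∑ j₀ : Fin (n+1), ∑ a : Fin (n+1),
        (fpoly s t α (j₀:ℕ) * ∏ ℓ ∈ Finset.Ico (j₀:ℕ) n, t ℓ)
        * ((if (a:ℕ) ≤ (j₀:ℕ) then
              fpoly s t β (a:ℕ) * (∏ ℓ ∈ Finset.Ico (a:ℕ) (j₀:ℕ), t ℓ)
                * fpolyShift s t ((j₀:ℕ)+1) β (n - (j₀:ℕ))
            else fpoly s t β (j₀:ℕ) * fpolyShift s t ((a:ℕ)+1) β (n - (a:ℕ)))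
          * fpoly s t γ (a:ℕ)))
      = (∑ j ∈ Finset.range (n + 1), ∑ k ∈ Finset.range (j + 1),
            fpoly s t α j * fpoly s t β k * fpoly s t γ k
              * fpolyShift s t (j + 1) β (n - j) * ∏ ℓ ∈ Finset.Ico k n, t ℓ)
          + ∑ k ∈ Finset.range (n + 1), ∑ j ∈ Finset.range k,
              fpoly s t α j * fpoly s t β j * fpoly s t γ k
                * fpolyShift s t (k + 1) β (n - k) * ∏ ℓ ∈ Finset.Ico j n, t ℓ := by
  have hout : (∑ j₀ : Fin (n+1), ∑ a : Fin (n+1),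
        (fpoly s t α (j₀:ℕ) * ∏ ℓ ∈ Finset.Ico (j₀:ℕ) n, t ℓ)
        * ((if (a:ℕ) ≤ (j₀:ℕ) then
              fpoly s t β (a:ℕ) * (∏ ℓ ∈ Finset.Ico (a:ℕ) (j₀:ℕ), t ℓ)
                * fpolyShift s t ((j₀:ℕ)+1) β (n - (j₀:ℕ))
            else fpoly s t β (j₀:ℕ) * fpolyShift s t ((a:ℕ)+1) β (n - (a:ℕ)))
          * fpoly s t γ (a:ℕ)))
      = ∑ j ∈ Finset.range (n+1), ∑ a ∈ Finset.range (n+1),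
          (fpoly s t α j * ∏ ℓ ∈ Finset.Ico j n, t ℓ)
          * ((if a ≤ j then
                fpoly s t β a * (∏ ℓ ∈ Finset.Ico a j, t ℓ) * fpolyShift s t (j+1) β (n - j)
              else fpoly s t β j * fpolyShift s t (a+1) β (n - a))
            * fpoly s t γ a) := by
    rw [← Fin.sum_univ_eq_sum_range (fun j => ∑ a ∈ Finset.range (n+1),
      (fpoly s t α j * ∏ ℓ ∈ Finset.Ico j n, t ℓ)
        * ((if a ≤ j then
              fpoly s t β a * (∏ ℓ ∈ Finset.Ico a j, t ℓ) * fpolyShift s t (j+1) β (n - j)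
            else fpoly s t β j * fpolyShift s t (a+1) β (n - a))
          * fpoly s t γ a)) (n+1)]
    exact Finset.sum_congr rfl fun j₀ _ => Fin.sum_univ_eq_sum_range (fun a =>
      (fpoly s t α (j₀:ℕ) * ∏ ℓ ∈ Finset.Ico (j₀:ℕ) n, t ℓ)
        * ((if a ≤ (j₀:ℕ) then
              fpoly s t β a * (∏ ℓ ∈ Finset.Ico a (j₀:ℕ), t ℓ)
                * fpolyShift s t ((j₀:ℕ)+1) β (n - (j₀:ℕ))
            else fpoly s t β (j₀:ℕ) * fpolyShift s t (a+1) β (n - a))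
          * fpoly s t γ a)) (n+1)
  rw [hout]
  have hsplit : ∀ j ∈ Finset.range (n+1),
      (∑ a ∈ Finset.range (n+1),
          (fpoly s t α j * ∏ ℓ ∈ Finset.Ico j n, t ℓ)
          * ((if a ≤ j then
                fpoly s t β a * (∏ ℓ ∈ Finset.Ico a j, t ℓ) * fpolyShift s t (j+1) β (n - j)
              else fpoly s t β j * fpolyShift s t (a+1) β (n - a))
            * fpoly s t γ a))
        = (∑ a ∈ Finset.range (j+1),
            (fpoly s t α j * ∏ ℓ ∈ Finset.Ico j n, t ℓ)
            * ((if a ≤ j then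
                  fpoly s t β a * (∏ ℓ ∈ Finset.Ico a j, t ℓ) * fpolyShift s t (j+1) β (n - j)
                else fpoly s t β j * fpolyShift s t (a+1) β (n - a))
              * fpoly s t γ a))
          + ∑ a ∈ Finset.Ico (j+1) (n+1),
              (fpoly s t α j * ∏ ℓ ∈ Finset.Ico j n, t ℓ)
              * ((if a ≤ j then
                    fpoly s t β a * (∏ ℓ ∈ Finset.Ico a j, t ℓ) * fpolyShift s t (j+1) β (n - j)
                  else fpoly s t β j * fpolyShift s t (a+1) β (n - a))
                * fpoly s t γ a) := by
    intro j hj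
    rw [Finset.mem_range] at hj
    simp only [Finset.range_eq_Ico]
    exact (Finset.sum_Ico_consecutive _ (Nat.zero_le (j+1)) (by omega)).symm
  rw [Finset.sum_congr rfl hsplit, Finset.sum_add_distrib]
  congr 1
  · apply Finset.sum_congr rfl
    intro j hj
    apply Finset.sum_congr rfl
    intro a ha
    rw [Finset.mem_range] at hj ha
    rw [if_pos (by omega : a ≤ j),
      ← Finset.prod_Ico_consecutive t (show a ≤ j by omega) (show j ≤ n by omega)]
    ring
  · have hinner : ∀ j ∈ Finset.range (n+1), ∀ a ∈ Finset.Ico (j+1) (n+1),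
        (fpoly s t α j * ∏ ℓ ∈ Finset.Ico j n, t ℓ)
          * ((if a ≤ j then
                fpoly s t β a * (∏ ℓ ∈ Finset.Ico a j, t ℓ) * fpolyShift s t (j+1) β (n - j)
              else fpoly s t β j * fpolyShift s t (a+1) β (n - a))
            * fpoly s t γ a)
          = fpoly s t α j * fpoly s t β j * fpoly s t γ a
              * fpolyShift s t (a + 1) β (n - a) * ∏ ℓ ∈ Finset.Ico j n, t ℓ := by
      intro j _ a ha
      rw [Finset.mem_Ico] at ha
      rw [if_neg (by omega)]
      ring
    rw [Finset.sum_congr rfl fun j hj => Finset.sum_congr rfl (hinner j hj)]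
    exact sum_triangle_swap (n+1) (fun j a => fpoly s t α j * fpoly s t β j * fpoly s t γ a
      * fpolyShift s t (a + 1) β (n - a) * ∏ ℓ ∈ Finset.Ico j n, t ℓ)

end
end HankelAux

/-- Theorem 5, Eq. (7.1): for `n ≥ 1` and real `α, β, γ`,
`det(αβγ m_{i+j} + (αβ+βγ+γα) m_{i+j+1} + (α+β+γ) m_{i+j+2} + m_{i+j+3})_{i,j=0}^{n-1}`
equals
`( ∑_{0≤k≤j≤n} f_j(α) f_k(β) f_k(γ) f^{(j+1)}_{n-j}(β) ∏_{ℓ=k}^{n-1} t_ℓ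
  + ∑_{0≤j<k≤n} f_j(α) f_j(β) f_k(γ) f^{(k+1)}_{n-k}(β) ∏_{ℓ=j}^{n-1} t_ℓ )
 · det(m_{i+j})_{i,j=0}^{n-1}`. -/
theorem hankel_four_term_moments (s t : ℕ → ℝ) (ht : ∀ n, t n ≠ 0)
    (n : ℕ) (hn : 0 < n) (α β γ : ℝ) :
    Matrix.det (Matrix.of fun i j : Fin n =>
        α * β * γ * motzkinGF s t ((i : ℕ) + (j : ℕ)) 0
          + (α * β + β * γ + γ * α) * motzkinGF s t ((i : ℕ) + (j : ℕ) + 1) 0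
          + (α + β + γ) * motzkinGF s t ((i : ℕ) + (j : ℕ) + 2) 0
          + motzkinGF s t ((i : ℕ) + (j : ℕ) + 3) 0)
      = ((∑ j ∈ Finset.range (n + 1), ∑ k ∈ Finset.range (j + 1),
            fpoly s t α j * fpoly s t β k * fpoly s t γ k
              * fpolyShift s t (j + 1) β (n - j) * ∏ ℓ ∈ Finset.Ico k n, t ℓ)
          + ∑ k ∈ Finset.range (n + 1), ∑ j ∈ Finset.range k,
              fpoly s t α j * fpoly s t β j * fpoly s t γ k
                * fpolyShift s t (k + 1) β (n - k) * ∏ ℓ ∈ Finset.Ico j n, t ℓ)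
        * Matrix.det (Matrix.of fun i j : Fin n =>
            motzkinGF s t ((i : ℕ) + (j : ℕ)) 0) := by
  classical
  have hL : (Matrix.of fun i j : Fin n =>
      α * β * γ * motzkinGF s t ((i : ℕ) + (j : ℕ)) 0
        + (α * β + β * γ + γ * α) * motzkinGF s t ((i : ℕ) + (j : ℕ) + 1) 0
        + (α + β + γ) * motzkinGF s t ((i : ℕ) + (j : ℕ) + 2) 0
        + motzkinGF s t ((i : ℕ) + (j : ℕ) + 3) 0)
      = HankelAux.Amat s t n * HankelAux.Dmat t n * Matrix.transpose (HankelAux.Bmat s t n α β γ) := by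
    ext i j
    exact (HankelAux.LHS_entry s t n α β γ i j).symm
  have hH : (Matrix.of fun i j : Fin n => motzkinGF s t ((i : ℕ) + (j : ℕ)) 0)
      = HankelAux.Amat s t n * HankelAux.Dmat t n * Matrix.transpose (HankelAux.Amat s t n) := by
    ext i j
    exact (HankelAux.H_entry s t n i j).symm
  rw [hL, hH, Matrix.det_mul, Matrix.det_mul, Matrix.det_mul, Matrix.det_mul,
    Matrix.det_transpose, Matrix.det_transpose, HankelAux.det_Amat,
    HankelAux.det_Bmat_eq_det_Btilde, HankelAux.det_Btilde, HankelAux.cb_sum_eq]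
  ring
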